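/- arXiv:1703.10262 — 2 statements merged into one kernel-verified Lean document; each statement's English description precedes it below -/
import Mathlib

section
/- Let (W,≺) be a finite transitive irreflexive tree with root r, M a Kripke model on it, and suppose to each world a is assigned an arithmetic sentence F_a such that: (i) PA ⊢ ⋁_{a∈W} F_a; (ii) PA ⊢ ¬(F_a ∧ F_b) for a ≠ b; (iii) for every subset A ⊆ W, PA + □^{h(r)+1}⊥ ⊢ ◇(⋁_{a∈A} F_a) ↔ ⋁_{b : ∃a∈A, b≺a} F_b. Define the evaluation f on propositional variables by f(v) = ⋁_{M,a ⊩ v} F_a and extend it commuting with connectives and sending □ to the provability predicate. Then for every modal formula ψ, PA + □^{h(r)+1}⊥ ⊢ f(ψ) ↔ ⋁_{M,a ⊩ ψ} F_a. -/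
/-- Propositional formulas, used to express "all propositional tautologies". -/
inductive PropForm : Type
  | var : ℕ → PropForm
  | bot : PropForm
  | imp : PropForm → PropForm → PropForm

/-- Boolean evaluation of a propositional formula. -/
def PropForm.eval (v : ℕ → Bool) : PropForm → Bool
  | .var n => v n
  | .bot => false
  | .imp p q => !(p.eval v) || q.eval v

/-- Modal formulas (⊥, →, □ are primitive; ¬, ⊤, ∧, ◇ are defined). -/
inductive Modal : Type
  | var : ℕ → Modal
  | bot : Modal
  | imp : Modal → Modal → Modal
  | box : Modal → Modal

/-- Substitution of modal formulas for the atoms of a propositional formula. -/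
def PropForm.subst (σ : ℕ → Modal) : PropForm → Modal
  | .var n => σ n
  | .bot => .bot
  | .imp p q => .imp (p.subst σ) (q.subst σ)

def Modal.neg (φ : Modal) : Modal := .imp φ .bot
def Modal.top : Modal := Modal.neg .bot
def Modal.dia (φ : Modal) : Modal := .neg (.box (.neg φ))
def Modal.and (φ ψ : Modal) : Modal := .neg (.imp φ (.neg ψ))

/-- The Gödel–Löb provability logic GL: all propositional tautologies
(i.e. substitution instances of Boolean tautologies), the distribution axiom,
Löb's axiom, modus ponens and necessitation. -/
inductive GLProvable : Modal → Prop
  | taut (p : PropForm) (σ : ℕ → Modal) : (∀ v, p.eval v = true) → GLProvable (p.subst σ)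
  | distr (φ ψ : Modal) : GLProvable (((φ.imp ψ).box).imp ((φ.box).imp (ψ.box)))
  | lob (φ : Modal) : GLProvable ((((φ.box).imp φ).box).imp (φ.box))
  | mp {φ ψ : Modal} : GLProvable (φ.imp ψ) → GLProvable φ → GLProvable ψ
  | nec {φ : Modal} : GLProvable φ → GLProvable (φ.box)

/-- Kripke semantics: forcing of a modal formula at a world of a frame `(W, R)`
under a valuation `V`. -/
def Forces {W : Type} (R : W → W → Prop) (V : ℕ → W → Prop) : Modal → W → Prop
  | .var n, w => V n w
  | .bot, _ => False
  | .imp φ ψ, w => Forces R V φ w → Forces R V ψ w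
  | .box φ, w => ∀ w', R w w' → Forces R V φ w'

/-- An irreflexive transitive tree: a transitive irreflexive relation `lt` with a
root `root` such that every other element lies strictly above the root, and for
every world `w` the restriction of `lt` to the worlds strictly below `w` is a
strict well-order. -/
structure ITTree (W : Type) where
  lt : W → W → Prop
  trans : ∀ {a b c : W}, lt a b → lt b c → lt a c
  irrefl : ∀ a : W, ¬ lt a a
  root : W
  root_lt : ∀ a : W, a ≠ root → lt root a
  down_wellorder : ∀ w : W,
    IsWellOrder {a : W // lt a w} (fun x y => lt x.1 y.1)

/-- `b` is an immediate successor of `a`. -/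
def ITTree.ImmSucc {W : Type} (T : ITTree W) (a b : W) : Prop :=
  T.lt a b ∧ ∀ c : W, ¬ (T.lt a c ∧ T.lt c b)

/-- An abstract rendering of the arithmetic side: a type of sentences of
arithmetic with implication and falsity, the provability predicate `Pr`
(sending a sentence `A` to the sentence `Prv(⌜A⌝)`), and provability in PA
(`Prov`).  `Prov` contains a complete Hilbert-style axiomatization of classical
propositional logic and is closed under modus ponens, and `Pr` satisfies the
Hilbert–Bernays–Löb derivability conditions D1–D3 over PA. -/
structure ProvLogic where
  Sent : Type
  falsum : Sent
  impS : Sent → Sent → Sent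
  Pr : Sent → Sent
  Prov : Sent → Prop
  ax1 : ∀ A B, Prov (impS A (impS B A))
  ax2 : ∀ A B C, Prov (impS (impS A (impS B C)) (impS (impS A B) (impS A C)))
  ax3 : ∀ A, Prov (impS (impS (impS A falsum) falsum) A)
  mp : ∀ {A B}, Prov (impS A B) → Prov A → Prov B
  D1 : ∀ {A}, Prov A → Prov (Pr A)
  D2 : ∀ A B, Prov (impS (Pr (impS A B)) (impS (Pr A) (Pr B)))
  D3 : ∀ A, Prov (impS (Pr A) (Pr (Pr A)))

namespace ProvLogic

variable (S : ProvLogic)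

def neg (A : S.Sent) : S.Sent := S.impS A S.falsum
def top : S.Sent := S.neg S.falsum
def andS (A B : S.Sent) : S.Sent := S.neg (S.impS A (S.neg B))
def orS (A B : S.Sent) : S.Sent := S.impS (S.neg A) B
def iffS (A B : S.Sent) : S.Sent := S.andS (S.impS A B) (S.impS B A)
/-- ◇A := ¬Pr(¬A). -/
def dia (A : S.Sent) : S.Sent := S.neg (S.Pr (S.neg A))

/-- n-fold □ (i.e. `Pr`). -/
def boxIter : ℕ → S.Sent → S.Sent
  | 0, A => A
  | n + 1, A => S.Pr (boxIter n A)

/-- n-fold ◇. -/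
def diaIter : ℕ → S.Sent → S.Sent
  | 0, A => A
  | n + 1, A => S.dia (diaIter n A)

end ProvLogic

/-- Finite disjunction of a list of sentences (the empty disjunction is ⊥,
i.e. `0 = 1`). -/
def ProvLogic.bigOr (S : ProvLogic) (l : List S.Sent) : S.Sent :=
  l.foldr S.orS S.falsum

open scoped Classical in
/-- The disjunction `⋁_{a ∈ A} F a`. -/
noncomputable def ProvLogic.disj (S : ProvLogic) {W : Type} [Fintype W]
    (F : W → S.Sent) (P : W → Prop) : S.Sent :=
  S.bigOr (((Finset.univ.filter fun a => P a).toList).map F)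


/-! ### Auxiliary development: propositional completeness for `ProvLogic` -/

namespace PropForm

def varsOf : PropForm → List ℕ
  | .var n => [n]
  | .bot => []
  | .imp p q => varsOf p ++ varsOf q

def negP (p : PropForm) : PropForm := .imp p .bot
def andP (p q : PropForm) : PropForm := negP (.imp p (negP q))
def orP (p q : PropForm) : PropForm := .imp (negP p) q
def iffP (p q : PropForm) : PropForm := andP (.imp p q) (.imp q p)

lemma eval_congr {v w : ℕ → Bool} :
    ∀ p : PropForm, (∀ n ∈ p.varsOf, v n = w n) → p.eval v = p.eval w
  | .var n, h => h n (by simp [varsOf])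
  | .bot, _ => rfl
  | .imp p q, h => by
      simp only [eval]
      rw [eval_congr p (fun n hn => h n (by simp [varsOf, hn])),
        eval_congr q (fun n hn => h n (by simp [varsOf, hn]))]

end PropForm

namespace ProvLogic

def sinterp (S : ProvLogic) (σ : ℕ → S.Sent) : PropForm → S.Sent
  | .var n => σ n
  | .bot => S.falsum
  | .imp p q => S.impS (sinterp S σ p) (sinterp S σ q)

def litS (S : ProvLogic) (σ : ℕ → S.Sent) (v : ℕ → Bool) (n : ℕ) : S.Sent :=
  if v n then σ n else S.neg (σ n)

variable (S : ProvLogic)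

lemma a1' {A : S.Sent} (B : S.Sent) (h : S.Prov A) : S.Prov (S.impS B A) :=
  S.mp (S.ax1 A B) h

lemma mpd {X A B : S.Sent} (h1 : S.Prov (S.impS X (S.impS A B)))
    (h2 : S.Prov (S.impS X A)) : S.Prov (S.impS X B) :=
  S.mp (S.mp (S.ax2 X A B) h1) h2

lemma impRefl (A : S.Sent) : S.Prov (S.impS A A) :=
  S.mpd (S.ax1 A (S.impS A A)) (S.ax1 A A)

lemma impTrans {A B C : S.Sent} (h1 : S.Prov (S.impS A B))
    (h2 : S.Prov (S.impS B C)) : S.Prov (S.impS A C) :=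
  S.mpd (S.a1' A h2) h1

lemma compL (P Q R : S.Sent) :
    S.Prov (S.impS (S.impS Q R) (S.impS (S.impS P Q) (S.impS P R))) :=
  S.impTrans (S.ax1 (S.impS Q R) P) (S.ax2 P Q R)

lemma impMono {X Y : S.Sent} (C : S.Sent) (h : S.Prov (S.impS X Y)) :
    S.Prov (S.impS (S.impS C X) (S.impS C Y)) :=
  S.mp (S.compL C X Y) h

lemma swapI (A B C : S.Sent) :
    S.Prov (S.impS (S.impS A (S.impS B C)) (S.impS B (S.impS A C))) := by
  have t3 := S.impTrans (S.ax2 A B C) (S.compL B (S.impS A B) (S.impS A C))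
  exact S.mpd t3 (S.a1' _ (S.ax1 B A))

def Der (Γ : List S.Sent) (A : S.Sent) : Prop := S.Prov (Γ.foldr S.impS A)

lemma derOfProv {Γ : List S.Sent} {A : S.Sent} (h : S.Prov A) : S.Der Γ A := by
  induction Γ with
  | nil => exact h
  | cons B Γ ih => exact S.a1' _ ih

lemma derWeaken {Γ : List S.Sent} {A : S.Sent} (B : S.Sent) (h : S.Der Γ A) :
    S.Der (B :: Γ) A := S.a1' _ h

lemma derHead {Γ : List S.Sent} {A : S.Sent} : S.Der (A :: Γ) A := by
  induction Γ with
  | nil => exact S.impRefl A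
  | cons C Γ ih => exact S.impTrans ih (S.ax1 _ C)

lemma derMem {Γ : List S.Sent} {A : S.Sent} (h : A ∈ Γ) : S.Der Γ A := by
  induction Γ with
  | nil => simp at h
  | cons B Γ ih =>
      rcases List.mem_cons.mp h with rfl | h
      · exact S.derHead
      · exact S.derWeaken _ (ih h)

lemma foldMp (Γ : List S.Sent) (A B : S.Sent) :
    S.Prov (S.impS (Γ.foldr S.impS (S.impS A B))
      (S.impS (Γ.foldr S.impS A) (Γ.foldr S.impS B))) := by
  induction Γ with
  | nil => exact S.impRefl _
  | cons C Γ ih => exact S.impTrans (S.impMono C ih) (S.ax2 C _ _)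

lemma derMp {Γ : List S.Sent} {A B : S.Sent} (h1 : S.Der Γ (S.impS A B))
    (h2 : S.Der Γ A) : S.Der Γ B := S.mp (S.mp (S.foldMp Γ A B) h1) h2

lemma rotI (Γ : List S.Sent) (A B : S.Sent) :
    S.Prov (S.impS (S.impS A (Γ.foldr S.impS B)) (Γ.foldr S.impS (S.impS A B))) := by
  induction Γ with
  | nil => exact S.impRefl _
  | cons C Γ ih => exact S.impTrans (S.swapI A C _) (S.impMono C ih)

lemma rotI' (Γ : List S.Sent) (A B : S.Sent) :
    S.Prov (S.impS (Γ.foldr S.impS (S.impS A B)) (S.impS A (Γ.foldr S.impS B))) := by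
  induction Γ with
  | nil => exact S.impRefl _
  | cons C Γ ih => exact S.impTrans (S.impMono C ih) (S.swapI C A _)

lemma derIntro {Γ : List S.Sent} {A B : S.Sent} (h : S.Der (A :: Γ) B) :
    S.Der Γ (S.impS A B) := S.mp (S.rotI Γ A B) h

lemma derElim {Γ : List S.Sent} {A B : S.Sent} (h : S.Der Γ (S.impS A B)) :
    S.Der (A :: Γ) B := S.mp (S.rotI' Γ A B) h

lemma efq (A : S.Sent) : S.Prov (S.impS S.falsum A) := by
  have h1 : S.Der [S.falsum] S.falsum := S.derHead
  have h2 : S.Der [S.falsum] (S.impS (S.impS A S.falsum) S.falsum) :=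
    S.derMp (S.derOfProv (S.ax1 S.falsum (S.impS A S.falsum))) h1
  exact S.derMp (S.derOfProv (S.ax3 A)) h2

lemma caseSplit {Γ : List S.Sent} {A C : S.Sent} (h1 : S.Der (A :: Γ) C)
    (h2 : S.Der (S.neg A :: Γ) C) : S.Der Γ C := by
  have d1 : S.Der Γ (S.impS A C) := S.derIntro h1
  have d2 : S.Der Γ (S.impS (S.impS A S.falsum) C) := S.derIntro h2
  set Γ' := S.impS C S.falsum :: Γ with hΓ'
  have nc : S.Der Γ' (S.impS C S.falsum) := S.derHead
  have na : S.Der Γ' (S.impS A S.falsum) := by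
    apply S.derIntro
    have hA : S.Der (A :: Γ') A := S.derHead
    have hc : S.Der (A :: Γ') C :=
      S.derMp (S.derWeaken _ (S.derWeaken _ d1)) hA
    exact S.derMp (S.derWeaken _ nc) hc
  have c2 : S.Der Γ' C := S.derMp (S.derWeaken _ d2) na
  have bot : S.Der Γ' S.falsum := S.derMp nc c2
  have nn : S.Der Γ (S.impS (S.impS C S.falsum) S.falsum) := S.derIntro bot
  exact S.derMp (S.derOfProv (S.ax3 C)) nn

lemma kalmar (σ : ℕ → S.Sent) (v : ℕ → Bool) (p : PropForm) (Γ : List S.Sent)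
    (hv : ∀ n ∈ p.varsOf, S.Der Γ (S.litS σ v n)) :
    S.Der Γ (if p.eval v then S.sinterp σ p else S.neg (S.sinterp σ p)) := by
  induction p with
  | var n =>
      have h := hv n (by simp [PropForm.varsOf])
      cases hvn : v n <;> simp_all [PropForm.eval, ProvLogic.litS, sinterp]
  | bot =>
      simp only [PropForm.eval, if_neg Bool.false_ne_true]
      exact S.derOfProv (S.impRefl _)
  | imp p q ihp ihq =>
      have hvp : ∀ n ∈ p.varsOf, S.Der Γ (S.litS σ v n) := fun n hn =>
        hv n (by simp [PropForm.varsOf, hn])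
      have hvq : ∀ n ∈ q.varsOf, S.Der Γ (S.litS σ v n) := fun n hn =>
        hv n (by simp [PropForm.varsOf, hn])
      have ihp := ihp hvp
      have ihq := ihq hvq
      cases hp : p.eval v <;> cases hq : q.eval v <;>
        simp only [hp, hq, PropForm.eval, Bool.not_false, Bool.not_true,
          Bool.false_or, Bool.true_or, Bool.or_false, Bool.or_true,
          if_true, if_neg Bool.false_ne_true, if_pos rfl] at ihp ihq ⊢
      · -- p false, q false : goal (P→Q)
        apply S.derIntro
        have hbot : S.Der (S.sinterp σ p :: Γ) S.falsum :=
          S.derMp (S.derWeaken _ ihp) S.derHead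
        exact S.derMp (S.derOfProv (S.efq _)) hbot
      · -- p false, q true
        apply S.derIntro
        exact S.derWeaken _ ihq
      · -- p true, q false : goal ¬(P→Q)
        apply S.derIntro
        have hPQ : S.Der (S.impS (S.sinterp σ p) (S.sinterp σ q) :: Γ)
            (S.impS (S.sinterp σ p) (S.sinterp σ q)) := S.derHead
        have hQ := S.derMp hPQ (S.derWeaken _ ihp)
        exact S.derMp (S.derWeaken _ ihq) hQ
      · -- p true, q true
        apply S.derIntro
        exact S.derWeaken _ ihq

lemma strip (σ : ℕ → S.Sent) (A : S.Sent) :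
    ∀ L : List ℕ, L.Nodup → (∀ v : ℕ → Bool, S.Der (L.map (S.litS σ v)) A) →
      S.Prov A
  | [], _, h => h (fun _ => true)
  | x :: L, nd, h => by
      have hx : x ∉ L := (List.nodup_cons.mp nd).1
      refine strip σ A L (List.nodup_cons.mp nd).2 (fun v => ?_)
      have maps : ∀ b : Bool,
          L.map (S.litS σ (Function.update v x b)) = L.map (S.litS σ v) := by
        intro b
        apply List.map_congr_left
        intro n hn
        have hne : n ≠ x := fun e => hx (e ▸ hn)
        simp [ProvLogic.litS, Function.update_of_ne hne]
      have ht := h (Function.update v x true)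
      have hf := h (Function.update v x false)
      rw [List.map_cons, maps] at ht hf
      have hlt : S.litS σ (Function.update v x true) x = σ x := by
        simp [ProvLogic.litS, Function.update_self]
      have hlf : S.litS σ (Function.update v x false) x = S.neg (σ x) := by
        simp [ProvLogic.litS, Function.update_self]
      rw [hlt] at ht
      rw [hlf] at hf
      exact S.caseSplit ht hf

lemma tautProv (p : PropForm) (hp : ∀ v, p.eval v = true) (σ : ℕ → S.Sent) :
    S.Prov (S.sinterp σ p) := by
  apply S.strip σ _ p.varsOf.dedup (List.nodup_dedup _)
  intro v
  have hk := S.kalmar σ v p (p.varsOf.dedup.map (S.litS σ v))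
    (fun n hn => S.derMem (List.mem_map_of_mem (List.mem_dedup.mpr hn)))
  rwa [hp v, if_pos rfl] at hk

lemma tautN (p : PropForm) (N : ℕ) (σ : ℕ → S.Sent)
    (hN : ∀ n ∈ p.varsOf, n < N := by decide)
    (h : ∀ v : Fin N → Bool,
      p.eval (fun i => if hi : i < N then v ⟨i, hi⟩ else false) = true := by decide) :
    S.Prov (S.sinterp σ p) := by
  apply S.tautProv p _ σ
  intro v
  have e := PropForm.eval_congr (v := fun i => if hi : i < N then v i else false)
    (w := v) p (fun n hn => by simp [hN n hn])
  rw [← e]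
  exact h (fun j => v j.1)

end ProvLogic


/-! ### Derived rules and disjunction lemmas -/

namespace ProvLogic

variable (S : ProvLogic)

lemma iffIntro {A B : S.Sent} (h1 : S.Prov (S.impS A B)) (h2 : S.Prov (S.impS B A)) :
    S.Prov (S.iffS A B) := by
  have t := S.tautN (.imp (.var 0) (.imp (.var 1) (PropForm.andP (.var 0) (.var 1)))) 2
    (fun n => [S.impS A B, S.impS B A].getD n S.falsum)
  exact S.mp (S.mp t h1) h2

lemma iffElim1 {A B : S.Sent} (h : S.Prov (S.iffS A B)) : S.Prov (S.impS A B) :=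
  S.mp (S.tautN (.imp (PropForm.andP (.var 0) (.var 1)) (.var 0)) 2
    (fun n => [S.impS A B, S.impS B A].getD n S.falsum)) h

lemma iffElim2 {A B : S.Sent} (h : S.Prov (S.iffS A B)) : S.Prov (S.impS B A) :=
  S.mp (S.tautN (.imp (PropForm.andP (.var 0) (.var 1)) (.var 1)) 2
    (fun n => [S.impS A B, S.impS B A].getD n S.falsum)) h

lemma bigOrIntro {l : List S.Sent} {A : S.Sent} (h : A ∈ l) :
    S.Prov (S.impS A (S.bigOr l)) := by
  induction l with
  | nil => simp at h
  | cons B l ih =>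
      rcases List.mem_cons.mp h with rfl | h
      · exact S.tautN (.imp (.var 0) (PropForm.orP (.var 0) (.var 1))) 2
          (fun n => [A, S.bigOr l].getD n A)
      · exact S.impTrans (ih h)
          (S.tautN (.imp (.var 1) (PropForm.orP (.var 0) (.var 1))) 2
            (fun n => [B, S.bigOr l].getD n B))

lemma bigOrElim {l : List S.Sent} {C : S.Sent} (h : ∀ A ∈ l, S.Prov (S.impS A C)) :
    S.Prov (S.impS (S.bigOr l) C) := by
  induction l with
  | nil => exact S.efq C
  | cons B l ih =>
      have t := S.tautN (.imp (.imp (.var 0) (.var 2)) (.imp (.imp (.var 1) (.var 2))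
        (.imp (PropForm.orP (.var 0) (.var 1)) (.var 2)))) 3
        (fun n => [B, S.bigOr l, C].getD n C)
      exact S.mp (S.mp t (h B List.mem_cons_self))
        (ih (fun A hA => h A (List.mem_cons_of_mem _ hA)))

section DisjLemmas

open scoped Classical

variable {W : Type} [Fintype W] (F : W → S.Sent)

lemma disjIntro {P : W → Prop} {a : W} (ha : P a) :
    S.Prov (S.impS (F a) (S.disj F P)) :=
  S.bigOrIntro (by
    simp only [List.mem_map, Finset.mem_toList, Finset.mem_filter, Finset.mem_univ, true_and]
    exact ⟨a, ha, rfl⟩)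

lemma disjElim {P : W → Prop} {C : S.Sent} (h : ∀ a, P a → S.Prov (S.impS (F a) C)) :
    S.Prov (S.impS (S.disj F P) C) := by
  apply S.bigOrElim
  intro A hA
  simp only [List.mem_map, Finset.mem_toList, Finset.mem_filter, Finset.mem_univ,
    true_and] at hA
  obtain ⟨a, ha, rfl⟩ := hA
  exact h a ha

lemma pairNeg (hii : ∀ a b : W, a ≠ b → S.Prov (S.neg (S.andS (F a) (F b))))
    {a b : W} (hne : a ≠ b) : S.Prov (S.impS (F a) (S.impS (F b) S.falsum)) :=
  S.mp (S.tautN (.imp (PropForm.negP (PropForm.andP (.var 0) (.var 1)))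
    (.imp (.var 0) (.imp (.var 1) .bot))) 2
    (fun n => [F a, F b].getD n (F a))) (hii a b hne)

lemma disjNotIn (hii : ∀ a b : W, a ≠ b → S.Prov (S.neg (S.andS (F a) (F b))))
    {P : W → Prop} {a : W} (ha : ¬ P a) :
    S.Prov (S.impS (F a) (S.impS (S.disj F P) S.falsum)) := by
  have d : S.Prov (S.impS (S.disj F P) (S.impS (F a) S.falsum)) :=
    S.disjElim F (fun b hb => S.pairNeg F hii (fun e => ha (e ▸ hb)))
  exact S.mp (S.swapI _ _ _) d

lemma disjCases (hi : S.Prov (S.disj F fun _ => True)) {H X : S.Sent}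
    (h : ∀ a : W, S.Prov (S.impS (F a) (S.impS H X))) : S.Prov (S.impS H X) :=
  S.mp (S.disjElim F (fun a _ => h a)) hi

lemma disjCompl (hi : S.Prov (S.disj F fun _ => True)) {P : W → Prop} :
    S.Prov (S.impS (S.impS (S.disj F P) S.falsum) (S.disj F (fun a => ¬ P a))) := by
  apply S.disjCases F hi
  intro a
  by_cases ha : P a
  · have i := S.disjIntro F (P := P) ha
    exact S.mp (S.tautN (.imp (.imp (.var 0) (.var 1))
      (.imp (.var 0) (.imp (PropForm.negP (.var 1)) (.var 2)))) 3
      (fun n => [F a, S.disj F P, S.disj F (fun a => ¬ P a)].getD n (F a))) i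
  · have i := S.disjIntro F (P := fun a => ¬ P a) ha
    exact S.mp (S.tautN (.imp (.imp (.var 0) (.var 2))
      (.imp (.var 0) (.imp (PropForm.negP (.var 1)) (.var 2)))) 3
      (fun n => [F a, S.disj F P, S.disj F (fun a => ¬ P a)].getD n (F a))) i

lemma disjComplIn (hii : ∀ a b : W, a ≠ b → S.Prov (S.neg (S.andS (F a) (F b))))
    {P : W → Prop} :
    S.Prov (S.impS (S.disj F (fun a => ¬ P a)) (S.impS (S.disj F P) S.falsum)) :=
  S.disjElim F (fun _ ha => S.disjNotIn F hii ha)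

end DisjLemmas

lemma prMono {A B : S.Sent} (h : S.Prov (S.impS A B)) :
    S.Prov (S.impS (S.Pr A) (S.Pr B)) := S.mp (S.D2 A B) (S.D1 h)

lemma prIff {A B : S.Sent} (h : S.Prov (S.iffS A B)) :
    S.Prov (S.iffS (S.Pr A) (S.Pr B)) :=
  S.iffIntro (S.prMono (S.iffElim1 h)) (S.prMono (S.iffElim2 h))

lemma prIffH {H A B : S.Sent} (hH : S.Prov (S.impS H (S.Pr H)))
    (h : S.Prov (S.impS H (S.iffS A B))) :
    S.Prov (S.impS H (S.iffS (S.Pr A) (S.Pr B))) := by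
  have hpr : S.Prov (S.impS H (S.Pr (S.iffS A B))) :=
    S.impTrans hH (S.mp (S.D2 _ _) (S.D1 h))
  have f1 : S.Prov (S.impS H (S.impS (S.Pr A) (S.Pr B))) :=
    S.impTrans hpr (S.impTrans (S.prMono (S.tautN
      (.imp (PropForm.andP (.var 0) (.var 1)) (.var 0)) 2
      (fun n => [S.impS A B, S.impS B A].getD n A))) (S.D2 A B))
  have f2 : S.Prov (S.impS H (S.impS (S.Pr B) (S.Pr A))) :=
    S.impTrans hpr (S.impTrans (S.prMono (S.tautN
      (.imp (PropForm.andP (.var 0) (.var 1)) (.var 1)) 2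
      (fun n => [S.impS A B, S.impS B A].getD n A))) (S.D2 B A))
  exact S.mp (S.mp (S.tautN (.imp (.imp (.var 0) (.var 1)) (.imp (.imp (.var 0) (.var 2))
    (.imp (.var 0) (PropForm.andP (.var 1) (.var 2))))) 3
    (fun n => [H, S.impS (S.Pr A) (S.Pr B), S.impS (S.Pr B) (S.Pr A)].getD n H)) f1) f2

end ProvLogic

/-- embedding lemma: let `(W, ≺)` be a finite transitive
irreflexive tree with root `r` and height function `h`, `V` a Kripke model on
it, and `F a` arithmetic sentences with (i) `PA ⊢ ⋁_a F a`, (ii)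
`PA ⊢ ¬(F a ∧ F b)` for `a ≠ b`, and (iii) for every `A ⊆ W`,
`PA + □^{h r + 1}⊥ ⊢ ◇(⋁_{a∈A} F a) ↔ ⋁_{b : ∃ a∈A, b ≺ a} F b`.  If `f` is the
evaluation with `f v = ⋁_{a ⊩ v} F a` on variables, commuting with the
connectives and sending `□` to the provability predicate, then for every modal
formula ψ, `PA + □^{h r + 1}⊥ ⊢ f ψ ↔ ⋁_{a ⊩ ψ} F a`. -/
theorem embedding_lemma (S : ProvLogic) (W : Type) [Fintype W]
    (T : ITTree W) [DecidableRel T.lt] (V : ℕ → W → Prop) (h : W → ℕ)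
    (hh : ∀ a : W, h a =
      Finset.univ.sup (fun b => if T.lt a b then h b + 1 else 0))
    (F : W → S.Sent)
    (hi : S.Prov (S.disj F (fun _ => True)))
    (hii : ∀ a b : W, a ≠ b → S.Prov (S.neg (S.andS (F a) (F b))))
    (hiii : ∀ A : Set W, S.Prov (S.impS (S.boxIter (h T.root + 1) S.falsum)
      (S.iffS (S.dia (S.disj F (fun a => a ∈ A)))
        (S.disj F (fun b => ∃ a ∈ A, T.lt b a)))))
    (f : Modal → S.Sent)
    (hfvar : ∀ n : ℕ, f (Modal.var n) = S.disj F (fun a => V n a))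
    (hfbot : f Modal.bot = S.falsum)
    (hfimp : ∀ φ ψ : Modal, f (φ.imp ψ) = S.impS (f φ) (f ψ))
    (hfbox : ∀ φ : Modal, f (φ.box) = S.Pr (f φ)) :
    ∀ ψ : Modal, S.Prov (S.impS (S.boxIter (h T.root + 1) S.falsum)
      (S.iffS (f ψ) (S.disj F (fun a => Forces T.lt V ψ a)))) := by
  intro ψ
  have hHPrH : S.Prov (S.impS (S.boxIter (h T.root + 1) S.falsum)
      (S.Pr (S.boxIter (h T.root + 1) S.falsum))) :=
    S.D3 (S.boxIter (h T.root) S.falsum)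
  set H := S.boxIter (h T.root + 1) S.falsum with hHdef
  induction ψ with
  | var n =>
      rw [hfvar]
      have e : (fun a => Forces T.lt V (Modal.var n) a) = (fun a => V n a) := rfl
      rw [e]
      exact S.tautN (.imp (.var 0) (PropForm.iffP (.var 1) (.var 1))) 2
        (fun k => [H, S.disj F fun a => V n a].getD k H)
  | bot =>
      rw [hfbot]
      have e : S.disj F (fun a => Forces T.lt V Modal.bot a) = S.falsum := by
        have e0 : (fun a => Forces T.lt V Modal.bot a) = (fun _ : W => False) := rfl
        rw [e0]
        simp [ProvLogic.disj, ProvLogic.bigOr]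
      rw [e]
      exact S.tautN (.imp (.var 0) (PropForm.iffP .bot .bot)) 1
        (fun k => [H].getD k H)
  | imp φ χ ihφ ihχ =>
      rw [hfimp]
      have core1 : S.Prov (S.impS (S.disj F fun a => Forces T.lt V (φ.imp χ) a)
          (S.impS (S.disj F fun a => Forces T.lt V φ a)
            (S.disj F fun a => Forces T.lt V χ a))) := by
        apply S.disjElim
        intro a ha
        by_cases hφ : Forces T.lt V φ a
        · have i := S.disjIntro F (P := fun a => Forces T.lt V χ a) (ha hφ)
          exact S.mp (S.tautN (.imp (.imp (.var 0) (.var 1))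
            (.imp (.var 0) (.imp (.var 2) (.var 1)))) 3
            (fun k => [F a, S.disj F fun a => Forces T.lt V χ a,
              S.disj F fun a => Forces T.lt V φ a].getD k (F a))) i
        · have i := S.disjNotIn F hii (P := fun a => Forces T.lt V φ a) hφ
          exact S.mp (S.tautN (.imp (.imp (.var 0) (.imp (.var 1) .bot))
            (.imp (.var 0) (.imp (.var 1) (.var 2)))) 3
            (fun k => [F a, S.disj F fun a => Forces T.lt V φ a,
              S.disj F fun a => Forces T.lt V χ a].getD k (F a))) i
      have core2 : S.Prov (S.impS (S.impS (S.disj F fun a => Forces T.lt V φ a)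
          (S.disj F fun a => Forces T.lt V χ a))
          (S.disj F fun a => Forces T.lt V (φ.imp χ) a)) := by
        apply S.disjCases F hi
        intro a
        by_cases hie : Forces T.lt V (φ.imp χ) a
        · have i := S.disjIntro F (P := fun a => Forces T.lt V (φ.imp χ) a) hie
          exact S.mp (S.tautN (.imp (.imp (.var 0) (.var 1))
            (.imp (.var 0) (.imp (.var 2) (.var 1)))) 3
            (fun k => [F a, S.disj F fun a => Forces T.lt V (φ.imp χ) a,
              S.impS (S.disj F fun a => Forces T.lt V φ a)
                (S.disj F fun a => Forces T.lt V χ a)].getD k (F a))) i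
        · have hφ : Forces T.lt V φ a := by
            by_contra hc
            exact hie (fun hp => absurd hp hc)
          have hχ : ¬ Forces T.lt V χ a := fun hc => hie (fun _ => hc)
          have i1 := S.disjIntro F (P := fun a => Forces T.lt V φ a) hφ
          have i2 := S.disjNotIn F hii (P := fun a => Forces T.lt V χ a) hχ
          exact S.mp (S.mp (S.tautN (.imp (.imp (.var 0) (.var 1))
            (.imp (.imp (.var 0) (.imp (.var 2) .bot))
              (.imp (.var 0) (.imp (.imp (.var 1) (.var 2)) (.var 3))))) 4
            (fun k => [F a, S.disj F fun a => Forces T.lt V φ a,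
              S.disj F fun a => Forces T.lt V χ a,
              S.disj F fun a => Forces T.lt V (φ.imp χ) a].getD k (F a))) i1) i2
      have t := S.tautN (.imp (.imp (.var 0) (PropForm.iffP (.var 1) (.var 2)))
        (.imp (.imp (.var 0) (PropForm.iffP (.var 3) (.var 4)))
        (.imp (.imp (.var 5) (.imp (.var 2) (.var 4)))
        (.imp (.imp (.imp (.var 2) (.var 4)) (.var 5))
        (.imp (.var 0) (PropForm.iffP (.imp (.var 1) (.var 3)) (.var 5))))))) 6
        (fun k => [H, f φ, S.disj F fun a => Forces T.lt V φ a, f χ,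
          S.disj F fun a => Forces T.lt V χ a,
          S.disj F fun a => Forces T.lt V (φ.imp χ) a].getD k H)
      exact S.mp (S.mp (S.mp (S.mp t ihφ) ihχ) core1) core2
  | box φ ihφ =>
      rw [hfbox]
      have h3 := hiii {a | ¬ Forces T.lt V φ a}
      have e1 : (fun a => a ∈ {a | ¬ Forces T.lt V φ a}) =
          (fun a => ¬ Forces T.lt V φ a) := rfl
      have e2 : (fun b => ∃ a ∈ {a | ¬ Forces T.lt V φ a}, T.lt b a) =
          (fun b => ¬ Forces T.lt V (φ.box) b) := by
        funext b
        apply propext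
        constructor
        · rintro ⟨a, ha, hlt⟩ hb
          exact ha (hb a hlt)
        · intro hb
          by_contra hc
          push_neg at hc
          refine hb (fun w' hw' => ?_)
          by_contra hw
          exact hc w' hw hw'
      rw [e1, e2] at h3
      -- h3 : ⊢ H → (¬Pr(¬ D¬φ) ↔ D¬□φ)
      have n1 : S.Prov (S.impS (S.disj F fun a => ¬ Forces T.lt V φ a)
          (S.impS (S.disj F fun a => Forces T.lt V φ a) S.falsum)) :=
        S.disjComplIn F hii
      have n2 : S.Prov (S.impS (S.impS (S.disj F fun a => ¬ Forces T.lt V φ a) S.falsum)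
          (S.disj F fun a => Forces T.lt V φ a)) := by
        have := S.disjCompl F hi (P := fun a => ¬ Forces T.lt V φ a)
        have e3 : (fun a => ¬ ¬ Forces T.lt V φ a) = (fun a => Forces T.lt V φ a) := by
          funext a; exact propext not_not
        rwa [e3] at this
      have dir1 : S.Prov (S.impS (S.disj F fun a => Forces T.lt V φ a)
          (S.impS (S.disj F fun a => ¬ Forces T.lt V φ a) S.falsum)) :=
        S.mp (S.swapI _ _ _) n1
      have iff2 : S.Prov (S.iffS (S.disj F fun a => Forces T.lt V φ a)
          (S.impS (S.disj F fun a => ¬ Forces T.lt V φ a) S.falsum)) :=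
        S.iffIntro dir1 n2
      have pr2 := S.prIff iff2
      have prcong := S.prIffH hHPrH ihφ
      have nb1 : S.Prov (S.impS (S.disj F fun b => ¬ Forces T.lt V (φ.box) b)
          (S.impS (S.disj F fun a => Forces T.lt V (φ.box) a) S.falsum)) :=
        S.disjComplIn F hii
      have nb2 : S.Prov (S.impS
          (S.impS (S.disj F fun a => Forces T.lt V (φ.box) a) S.falsum)
          (S.disj F fun b => ¬ Forces T.lt V (φ.box) b)) :=
        S.disjCompl F hi
      -- combine: vars 0 = Pr fφ, 1 = Pr Dφ, 2 = Pr(D¬φ → ⊥), 3 = D¬□φ, 4 = D□φ, 5 = H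
      have t := S.tautN
        (.imp (.imp (.var 5) (PropForm.iffP (.var 0) (.var 1)))
        (.imp (PropForm.iffP (.var 1) (.var 2))
        (.imp (.imp (.var 5) (PropForm.iffP (PropForm.negP (.var 2)) (.var 3)))
        (.imp (.imp (.var 3) (PropForm.negP (.var 4)))
        (.imp (.imp (PropForm.negP (.var 4)) (.var 3))
        (.imp (.var 5) (PropForm.iffP (.var 0) (.var 4)))))))) 6
        (fun k => [S.Pr (f φ), S.Pr (S.disj F fun a => Forces T.lt V φ a),
          S.Pr (S.impS (S.disj F fun a => ¬ Forces T.lt V φ a) S.falsum),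
          S.disj F fun b => ¬ Forces T.lt V (φ.box) b,
          S.disj F fun a => Forces T.lt V (φ.box) a, H].getD k H)
      exact S.mp (S.mp (S.mp (S.mp (S.mp t prcong) pr2) h3) nb1) nb2
end

section
/- Suppose that in a finite transitive irreflexive tree, for every world x and every immediate successor y of x, the implication PA + □^{h(r)+1}⊥ ⊢ F_x → ◇F_y holds. Then for all worlds a ≺ b (not necessarily immediate), PA + □^{h(r)+1}⊥ ⊢ F_a → ◇F_b. -/
/-- Derivability from a list of hypotheses. -/
inductive Der (S : ProvLogic) : List S.Sent → S.Sent → Prop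
  | hyp {Γ A} : A ∈ Γ → Der S Γ A
  | ax {Γ A} : S.Prov A → Der S Γ A
  | mp {Γ A B} : Der S Γ (S.impS A B) → Der S Γ A → Der S Γ B

lemma prov_id (S : ProvLogic) (A : S.Sent) : S.Prov (S.impS A A) :=
  S.mp (S.mp (S.ax2 A (S.impS A A) A) (S.ax1 A (S.impS A A))) (S.ax1 A A)

lemma ded {S : ProvLogic} {Γ : List S.Sent} {A B : S.Sent}
    (h : Der S (A :: Γ) B) : Der S Γ (S.impS A B) := by
  induction h with
  | hyp h =>
    rcases List.mem_cons.1 h with rfl | h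
    · exact Der.ax (prov_id S _)
    · exact Der.mp (Der.ax (S.ax1 _ _)) (Der.hyp h)
  | ax h => exact Der.mp (Der.ax (S.ax1 _ _)) (Der.ax h)
  | mp _ _ ih1 ih2 => exact Der.mp (Der.mp (Der.ax (S.ax2 _ _ _)) ih1) ih2

lemma der_nil {S : ProvLogic} {A : S.Sent} (h : Der S [] A) : S.Prov A := by
  induction h with
  | hyp h => simp at h
  | ax h => exact h
  | mp _ _ ih1 ih2 => exact S.mp ih1 ih2

lemma prov_contrap (S : ProvLogic) (A B : S.Sent) :
    S.Prov (S.impS (S.impS A B) (S.impS (S.neg B) (S.neg A))) := by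
  apply der_nil; apply ded; apply ded
  show Der S _ (S.impS A S.falsum)
  apply ded
  set Γ : List S.Sent := [A, S.neg B, S.impS A B] with hΓ
  have d1 : Der S Γ A := Der.hyp (by simp [hΓ])
  have d2 : Der S Γ (S.impS B S.falsum) := Der.hyp (by simp [hΓ, ProvLogic.neg])
  have d3 : Der S Γ (S.impS A B) := Der.hyp (by simp [hΓ])
  exact Der.mp d2 (Der.mp d3 d1)

lemma prov_dni (S : ProvLogic) (A : S.Sent) :
    S.Prov (S.impS A (S.neg (S.neg A))) := by
  apply der_nil; apply ded
  show Der S _ (S.impS (S.neg A) S.falsum)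
  apply ded
  set Γ : List S.Sent := [S.neg A, A] with hΓ
  have d1 : Der S Γ (S.impS A S.falsum) := Der.hyp (by simp [hΓ, ProvLogic.neg])
  have d2 : Der S Γ A := Der.hyp (by simp [hΓ])
  exact Der.mp d1 d2

/-- K-style lemma: `□(A→B) → (◇A → ◇B)`. -/
lemma prov_dia_mono (S : ProvLogic) (A B : S.Sent) :
    S.Prov (S.impS (S.Pr (S.impS A B)) (S.impS (S.dia A) (S.dia B))) := by
  apply der_nil; apply ded
  show Der S _ (S.impS (S.dia A) (S.impS (S.Pr (S.neg B)) S.falsum))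
  apply ded; apply ded
  set Γ : List S.Sent := [S.Pr (S.neg B), S.dia A, S.Pr (S.impS A B)] with hΓ
  have d1 : Der S Γ (S.Pr (S.impS (S.neg B) (S.neg A))) := by
    refine Der.mp (Der.ax (S.mp (S.D2 _ _) (S.D1 (prov_contrap S A B)))) ?_
    exact Der.hyp (by simp [hΓ])
  have d2 : Der S Γ (S.Pr (S.neg A)) :=
    Der.mp (Der.mp (Der.ax (S.D2 _ _)) d1) (Der.hyp (by simp [hΓ]))
  have d3 : Der S Γ (S.impS (S.Pr (S.neg A)) S.falsum) :=
    Der.hyp (by simp [hΓ, ProvLogic.dia, ProvLogic.neg])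
  exact Der.mp d3 d2

/-- `◇◇B → ◇B`. -/
lemma prov_dia_dia (S : ProvLogic) (B : S.Sent) :
    S.Prov (S.impS (S.dia (S.dia B)) (S.dia B)) := by
  apply der_nil; apply ded
  show Der S _ (S.impS (S.Pr (S.neg B)) S.falsum)
  apply ded
  set Γ : List S.Sent := [S.Pr (S.neg B), S.dia (S.dia B)] with hΓ
  have d1 : Der S Γ (S.Pr (S.Pr (S.neg B))) :=
    Der.mp (Der.ax (S.D3 _)) (Der.hyp (by simp [hΓ]))
  have d2 : Der S Γ (S.Pr (S.neg (S.neg (S.Pr (S.neg B))))) :=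
    Der.mp (Der.mp (Der.ax (S.D2 _ _)) (Der.ax (S.D1 (prov_dni S _)))) d1
  have d3 : Der S Γ (S.impS (S.Pr (S.neg (S.dia B))) S.falsum) :=
    Der.hyp (by simp [hΓ, ProvLogic.dia, ProvLogic.neg])
  exact Der.mp d3 d2

/-- The chaining step: from `□X → (A → ◇B)` and `□X → (B → ◇C)` deduce
`□X → (A → ◇C)`, using `□X → □□X` (D3) and `◇◇C → ◇C`. -/
lemma prov_step (S : ProvLogic) (X A B C : S.Sent)
    (h1 : S.Prov (S.impS (S.Pr X) (S.impS A (S.dia B))))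
    (h2 : S.Prov (S.impS (S.Pr X) (S.impS B (S.dia C)))) :
    S.Prov (S.impS (S.Pr X) (S.impS A (S.dia C))) := by
  apply der_nil; apply ded; apply ded
  set Γ : List S.Sent := [A, S.Pr X] with hΓ
  have dBox : Der S Γ (S.Pr X) := Der.hyp (by simp [hΓ])
  have dA : Der S Γ A := Der.hyp (by simp [hΓ])
  have dDiaB : Der S Γ (S.dia B) := Der.mp (Der.mp (Der.ax h1) dBox) dA
  have dBoxBox : Der S Γ (S.Pr (S.Pr X)) := Der.mp (Der.ax (S.D3 X)) dBox
  have dBoxImp : Der S Γ (S.Pr (S.impS B (S.dia C))) :=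
    Der.mp (Der.ax (S.mp (S.D2 _ _) (S.D1 h2))) dBoxBox
  have dDiaDia : Der S Γ (S.dia (S.dia C)) :=
    Der.mp (Der.mp (Der.ax (prov_dia_mono S B (S.dia C))) dBoxImp) dDiaB
  exact Der.mp (Der.ax (prov_dia_dia S C)) dDiaDia

/-- the reduction step in Lemma 3.4: let `(W, ≺)` be a finite
transitive irreflexive tree with root `r` and height function `h`, let the
`F a` be arithmetic sentences, and let □/◇ abbreviate the standard PA
provability predicate and its dual (satisfying the HBL derivability conditions,
packaged in `S`).  If for every world `x` and every immediate successor `y` of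
`x` we have `PA + □^{h r + 1}⊥ ⊢ F x → ◇F y`, then for all worlds `a ≺ b` (not
necessarily immediate), `PA + □^{h r + 1}⊥ ⊢ F a → ◇F b`.  (The proof chains
along the maximal chain from `a` to `b`, using that `□^{h r + 1}⊥ → □□^{h r+1}⊥`
and `◇ⁿ F b → ◇ F b` are derivable from the HBL conditions.) -/
theorem chain_dia_lemma (S : ProvLogic) (W : Type) [Fintype W]
    (T : ITTree W) [DecidableRel T.lt] (h : W → ℕ)
    (hh : ∀ a : W, h a =
      Finset.univ.sup (fun b => if T.lt a b then h b + 1 else 0))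
    (F : W → S.Sent)
    (himm : ∀ x y : W, T.ImmSucc x y →
      S.Prov (S.impS (S.boxIter (h T.root + 1) S.falsum)
        (S.impS (F x) (S.dia (F y))))) :
    ∀ a b : W, T.lt a b →
      S.Prov (S.impS (S.boxIter (h T.root + 1) S.falsum)
        (S.impS (F a) (S.dia (F b)))) := by
  classical
  clear hh
  have hbox : S.boxIter (h T.root + 1) S.falsum
      = S.Pr (S.boxIter (h T.root) S.falsum) := rfl
  rw [hbox] at himm ⊢
  set X := S.boxIter (h T.root) S.falsum with hX
  have key : ∀ n : ℕ, ∀ a b : W, T.lt a b →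
      (Finset.univ.filter (fun x => T.lt a x ∧ T.lt x b)).card ≤ n →
      S.Prov (S.impS (S.Pr X) (S.impS (F a) (S.dia (F b)))) := by
    intro n
    induction n with
    | zero =>
      intro a b hab hcard
      refine himm a b ⟨hab, fun c hc => ?_⟩
      have hc' : c ∈ Finset.univ.filter (fun x => T.lt a x ∧ T.lt x b) := by
        simp [hc.1, hc.2]
      have he := Finset.card_eq_zero.mp (Nat.le_zero.mp hcard)
      simp [he] at hc'
    | succ n ih =>
      intro a b hab hcard
      rcases (Finset.univ.filter (fun x => T.lt a x ∧ T.lt x b)).eq_empty_or_nonempty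
        with he | hne
      · refine himm a b ⟨hab, fun c hc => ?_⟩
        have hc' : c ∈ Finset.univ.filter (fun x => T.lt a x ∧ T.lt x b) := by
          simp [hc.1, hc.2]
        simp [he] at hc'
      · obtain ⟨x, hx⟩ := hne
        simp only [Finset.mem_filter, Finset.mem_univ, true_and] at hx
        have wf : WellFounded (fun x y : {a : W // T.lt a b} => T.lt x.1 y.1) :=
          (T.down_wellorder b).toIsWellFounded.wf
        set s : Set {a : W // T.lt a b} := {x | T.lt a x.1} with hs
        have hsne : s.Nonempty := ⟨⟨x, hx.2⟩, hx.1⟩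
        set c := wf.min s hsne with hc
        have hac : T.lt a c.1 := wf.min_mem s hsne
        have hcb : T.lt c.1 b := c.2
        have himmac : T.ImmSucc a c.1 := by
          refine ⟨hac, fun d hd => ?_⟩
          have hdb : T.lt d b := T.trans hd.2 hcb
          exact wf.not_lt_min s (show (⟨d, hdb⟩ : {a : W // T.lt a b}) ∈ s
            from hd.1) hd.2
        -- the interval from c.1 to b is strictly smaller
        have hsub : Finset.univ.filter (fun x => T.lt c.1 x ∧ T.lt x b) ⊆
            (Finset.univ.filter (fun x => T.lt a x ∧ T.lt x b)).erase c.1 := by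
          intro y hy
          simp only [Finset.mem_filter, Finset.mem_univ, true_and] at hy
          refine Finset.mem_erase.mpr ⟨?_, ?_⟩
          · rintro rfl; exact T.irrefl _ hy.1
          · simp [T.trans hac hy.1, hy.2]
        have hcmem : c.1 ∈ Finset.univ.filter (fun x => T.lt a x ∧ T.lt x b) := by
          simp [hac, hcb]
        have hcard' : (Finset.univ.filter (fun x => T.lt c.1 x ∧ T.lt x b)).card ≤ n := by
          have := Finset.card_le_card hsub
          rw [Finset.card_erase_of_mem hcmem] at this
          omega
        exact prov_step S X (F a) (F c.1) (F b)
          (himm a c.1 himmac) (ih c.1 b hcb hcard')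
  intro a b hab
  exact key _ a b hab le_rfl
end
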